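/- arXiv:2304.10193 — 4 statements merged into one kernel-verified Lean document; each statement's English description precedes it below -/
import Mathlib

section
/- Let n ≥ 3 and let h₁,…,hₙ be real numbers satisfying 2h₁ = -(h₃+⋯+h_{n-1}) and (h₁+⋯+hₙ)² - (h₁²+⋯+hₙ²) = 1/2. Then it is impossible that all of the quantities h₁ - 1/2, h₂ + 1/2, h₃, …, h_{n-1}, hₙ + 1/2 are positive. -/
theorem stmt_0_general (n : ℕ) (h : ℕ → ℝ)
    (hcon1 : 2 * h 1 = -(∑ i ∈ Finset.Icc 3 (n - 1), h i)) :
    ¬ (0 < h 1 - 1 / 2 ∧ 0 < h 2 + 1 / 2 ∧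
        (∀ i, 3 ≤ i → i ≤ n - 1 → 0 < h i) ∧ 0 < h n + 1 / 2) := by
  rintro ⟨h1_pos, -, h_mid_pos, -⟩
  have h_mid_sum_nonneg : 0 ≤ ∑ i ∈ Finset.Icc 3 (n - 1), h i :=
    Finset.sum_nonneg fun i hi =>
      (h_mid_pos i (Finset.mem_Icc.mp hi).1 (Finset.mem_Icc.mp hi).2).le
  linarith

/-- Late-time Hubble rates of the `H₃ × ℝ^{n-3}` vacuum solution (with `k = 1`)
cannot all be positive. -/
theorem stmt_0 (n : ℕ) (hn : 3 ≤ n) (h : ℕ → ℝ)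
    (hcon1 : 2 * h 1 = -(∑ i ∈ Finset.Icc 3 (n - 1), h i))
    (hcon2 : (∑ i ∈ Finset.Icc 1 n, h i) ^ 2 - ∑ i ∈ Finset.Icc 1 n, (h i) ^ 2 = 1 / 2) :
    ¬ (0 < h 1 - 1 / 2 ∧ 0 < h 2 + 1 / 2 ∧
        (∀ i, 3 ≤ i → i ≤ n - 1 → 0 < h i) ∧ 0 < h n + 1 / 2) :=
  stmt_0_general n h hcon1
end

section
/- Let n ≥ 3 and let h₁,…,hₙ be real numbers satisfying 2h₁ = -(h₃+⋯+h_{n-1}) and (h₁+⋯+hₙ)² - (h₁²+⋯+hₙ²) = 1/2. Then it is impossible that all of the quantities h₁ - 1/2, h₂ + 1/2, h₃, …, h_{n-1}, hₙ + 1/2 are negative. -/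
/-!
Write `a = h₂`, `b = hₙ` and let `S` and `Q` be the sum and the sum of squares of the middle
rates `h₃, …, h_{n-1}`. Eliminating `h₁ = -S/2`, the quadratic constraint becomes
`S (a + b) + 2ab - Q = 1/2`. If all the rates in question were negative, the middle rates would
be nonpositive, so `Q ≤ S²`; and `-1 < S ≤ 0` with `a + b < -1` gives `S² ≤ S (a + b)`.
Hence `1/2 ≥ 2ab > 2 · 1/4`, a contradiction.
-/

open Finset

lemma Finset.sum_sq_le_sq_sum_of_nonpos {ι : Type*} {s : Finset ι} {f : ι → ℝ}
    (hf : ∀ i ∈ s, f i ≤ 0) : ∑ i ∈ s, f i ^ 2 ≤ (∑ i ∈ s, f i) ^ 2 := by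
  simpa [neg_sq, sum_neg_distrib] using
    sum_sq_le_sq_sum_of_nonneg (f := fun i ↦ -f i) fun i hi ↦ neg_nonneg.mpr (hf i hi)

lemma Finset.sum_Icc_one_eq_add_sum_Icc_three {M : Type*} [AddCommMonoid M] {n : ℕ}
    (hn : 3 ≤ n) (f : ℕ → M) :
    ∑ i ∈ Icc 1 n, f i = f 1 + f 2 + f n + ∑ i ∈ Icc 3 (n - 1), f i := by
  have hIcc : Icc 1 n = insert 1 (insert 2 (insert n (Icc 3 (n - 1)))) := by
    ext i; simp only [mem_Icc, mem_insert]; omega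
  rw [hIcc, sum_insert, sum_insert, sum_insert, add_assoc, add_assoc]
  all_goals simp only [mem_Icc, mem_insert]; omega

/-- Late-time Hubble rates of the `H₃ × ℝ^{n-3}` vacuum solution (with `k = 1`)
cannot all be negative. -/
theorem stmt_1 (n : ℕ) (hn : 3 ≤ n) (h : ℕ → ℝ)
    (hcon1 : 2 * h 1 = -(∑ i ∈ Finset.Icc 3 (n - 1), h i))
    (hcon2 : (∑ i ∈ Finset.Icc 1 n, h i) ^ 2 - ∑ i ∈ Finset.Icc 1 n, (h i) ^ 2 = 1 / 2) :
    ¬ (h 1 - 1 / 2 < 0 ∧ h 2 + 1 / 2 < 0 ∧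
        (∀ i, 3 ≤ i → i ≤ n - 1 → h i < 0) ∧ h n + 1 / 2 < 0) := by
  rintro ⟨h1_lt, h2_lt, hmid_neg, hn_lt⟩
  rw [sum_Icc_one_eq_add_sum_Icc_three hn, sum_Icc_one_eq_add_sum_Icc_three hn] at hcon2
  set S := ∑ i ∈ Icc 3 (n - 1), h i
  have hmid_nonpos : ∀ i ∈ Icc 3 (n - 1), h i ≤ 0 := fun i hi ↦
    (hmid_neg i (mem_Icc.mp hi).1 (mem_Icc.mp hi).2).le
  have hS_nonpos : S ≤ 0 := sum_nonpos hmid_nonpos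
  have hQ : ∑ i ∈ Icc 3 (n - 1), h i ^ 2 ≤ S ^ 2 := sum_sq_le_sq_sum_of_nonpos hmid_nonpos
  have hS_sq : S ^ 2 ≤ S * (h 2 + h n) := by nlinarith
  nlinarith [mul_pos (by linarith : 0 < -h 2 - 1 / 2) (by linarith : 0 < -h n - 1 / 2)]
end

section
/- Let A, B be (n-1)×(n-1) real matrices. If there exist an invertible (n-1)×(n-1) matrix P and a nonzero real constant c with B = c P⁻¹ A P, then the almost abelian Lie algebras 𝔤_A and 𝔤_B are isomorphic as Lie algebras. -/
namespace AlmostAbelian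

variable {K V : Type*} [Field K] [AddCommGroup V] [Module K V]

/-- The almost abelian Lie algebra `V ⋊_f K`: `V` is the abelian ideal and `(0, 1)` plays the
role of `Xₙ`, acting on `V` by `f`. -/
def bracket (f : Module.End K V) (x y : V × K) : V × K :=
  (x.2 • f y.1 - y.2 • f x.1, 0)

def scaledEquiv (Q : V ≃ₗ[K] V) {c : K} (hc : c ≠ 0) : (V × K) ≃ₗ[K] (V × K) :=
  Q.prodCongr (LinearEquiv.smulOfNeZero K K c⁻¹ (inv_ne_zero hc))

theorem scaledEquiv_bracket {f g : Module.End K V} (Q : V ≃ₗ[K] V) {c : K} (hc : c ≠ 0)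
    (hfg : ∀ v, g (Q v) = c • Q (f v)) (x y : V × K) :
    scaledEquiv Q hc (bracket f x y) =
      bracket g (scaledEquiv Q hc x) (scaledEquiv Q hc y) := by
  simp only [scaledEquiv, bracket, LinearEquiv.prodCongr_apply,
    LinearEquiv.smulOfNeZero_apply, smul_eq_mul, hfg, smul_smul, map_sub, map_smul, map_zero,
    mul_right_comm c⁻¹, inv_mul_cancel₀ hc, one_mul]

end AlmostAbelian

open Matrix in
theorem Matrix.mulVec_invOf_mulVec_of_eq_smul_conj {K n : Type*} [CommRing K] [Fintype n]
    [DecidableEq n] {A B P : Matrix n n K} [Invertible P] {c : K}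
    (hB : B = c • (P⁻¹ * A * P)) (v : n → K) :
    B *ᵥ (⅟P *ᵥ v) = c • ⅟P *ᵥ (A *ᵥ v) := by
  rw [hB, invOf_eq_nonsing_inv, smul_mulVec, mulVec_mulVec, Matrix.mul_assoc,
    mul_inv_of_invertible, Matrix.mul_one, ← mulVec_mulVec]

/-- If `B = c P⁻¹ A P` with `P` invertible and `c ≠ 0`, then the almost abelian
Lie algebras `𝔤_A` and `𝔤_B` are isomorphic: there is a linear equivalence
intertwining the brackets. -/
theorem stmt_9 (m : ℕ) (A B P : Matrix (Fin m) (Fin m) ℝ)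
    (hP : IsUnit P) (c : ℝ) (hc : c ≠ 0)
    (hB : B = c • (P⁻¹ * A * P))
    (brA brB : ((Fin m → ℝ) × ℝ) → ((Fin m → ℝ) × ℝ) → ((Fin m → ℝ) × ℝ))
    (hbrA : ∀ x y, brA x y = (x.2 • A.mulVec y.1 - y.2 • A.mulVec x.1, 0))
    (hbrB : ∀ x y, brB x y = (x.2 • B.mulVec y.1 - y.2 • B.mulVec x.1, 0)) :
    ∃ e : ((Fin m → ℝ) × ℝ) ≃ₗ[ℝ] ((Fin m → ℝ) × ℝ),
      ∀ x y, e (brA x y) = brB (e x) (e y) := by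
  have hPinv := hP.invertible
  have hbrA' : brA = AlmostAbelian.bracket (Matrix.toLin' A) := by
    funext x y; simp [hbrA, AlmostAbelian.bracket]
  have hbrB' : brB = AlmostAbelian.bracket (Matrix.toLin' B) := by
    funext x y; simp [hbrB, AlmostAbelian.bracket]
  refine ⟨AlmostAbelian.scaledEquiv (P.toLinearEquiv' hPinv).symm hc, ?_⟩
  rw [hbrA', hbrB']
  exact AlmostAbelian.scaledEquiv_bracket _ hc (Matrix.mulVec_invOf_mulVec_of_eq_smul_conj hB)
end

section
/- Let k > 0, c > 0 and h' ∈ ℝ, and define a : ℝ → ℝ by a(t) = (k^{1/2}/c^{1/4}) e^{-h't/2} (cosh(kt))^{-1/2}. Then a is positive, smooth, and H := a'/a satisfies H'(t) + (c/2) a(t)⁴ e^{2h't} = 0 for all t ∈ ℝ. -/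
open Real

/-- The explicit scale factor `a(t) = k^{1/2} c^{-1/4} e^{-h't/2} (cosh kt)^{-1/2}`
is positive, smooth, and its Hubble rate `H = a'/a` solves
`H' + (c/2) a⁴ e^{2h't} = 0`. -/
theorem stmt_12 (k c h' : ℝ) (hk : 0 < k) (hc : 0 < c)
    (a : ℝ → ℝ)
    (ha : ∀ t, a t = k ^ ((1 : ℝ) / 2) / c ^ ((1 : ℝ) / 4) *
      Real.exp (-h' * t / 2) * Real.cosh (k * t) ^ (-(1 : ℝ) / 2)) :
    (∀ t, 0 < a t) ∧ ContDiff ℝ (⊤ : ℕ∞) a ∧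
    (∀ t, deriv (fun s => deriv a s / a s) t
        + c / 2 * (a t) ^ 4 * Real.exp (2 * h' * t) = 0) := by
  have hC : 0 < k ^ ((1 : ℝ) / 2) / c ^ ((1 : ℝ) / 4) :=
    div_pos (rpow_pos_of_pos hk _) (rpow_pos_of_pos hc _)
  have hcosh : ∀ t : ℝ, 0 < Real.cosh (k * t) := fun t => Real.cosh_pos (x := k*t)
  have hapos : ∀ t, 0 < a t := by
    intro t
    rw [ha t]
    exact mul_pos (mul_pos hC (Real.exp_pos _)) (rpow_pos_of_pos (hcosh t) _)
  have hane : ∀ t, a t ≠ 0 := fun t => (hapos t).ne'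
  have hafun : a = fun t => k ^ ((1 : ℝ) / 2) / c ^ ((1 : ℝ) / 4) *
      Real.exp (-h' * t / 2) * Real.cosh (k * t) ^ (-(1 : ℝ) / 2) := funext ha
  -- derivative of inner functions
  have hcd : ∀ t : ℝ, HasDerivAt (fun s => Real.cosh (k * s)) (k * Real.sinh (k * t)) t := by
    intro t
    have := (Real.hasDerivAt_cosh (k * t)).comp t ((hasDerivAt_id t).const_mul k)
    exact this.congr_deriv (by ring)
  have hsd : ∀ t : ℝ, HasDerivAt (fun s => Real.sinh (k * s)) (k * Real.cosh (k * t)) t := by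
    intro t
    have := (Real.hasDerivAt_sinh (k * t)).comp t ((hasDerivAt_id t).const_mul k)
    exact this.congr_deriv (by ring)
  set H : ℝ → ℝ := fun t => -h' / 2 - k / 2 * (Real.sinh (k * t) / Real.cosh (k * t)) with hH
  have hda : ∀ t, HasDerivAt a (a t * H t) t := by
    intro t
    have he : HasDerivAt (fun s : ℝ => Real.exp (-h' * s / 2))
        (Real.exp (-h' * t / 2) * (-h' / 2)) t := by
      have hinner : HasDerivAt (fun s : ℝ => -h' * s / 2) (-h' / 2) t := by
        simpa using ((hasDerivAt_id t).const_mul (-h')).div_const 2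
      exact (Real.hasDerivAt_exp _).comp t hinner
    have hp := (hcd t).rpow_const (p := -(1 : ℝ) / 2) (Or.inl (hcosh t).ne')
    have := ((he.const_mul (k ^ ((1 : ℝ) / 2) / c ^ ((1 : ℝ) / 4))).mul hp)
    rw [hafun]
    refine this.congr_deriv ?_
    have hsplit : Real.cosh (k * t) ^ (-(1 : ℝ) / 2 - 1)
        = Real.cosh (k * t) ^ (-(1 : ℝ) / 2) / Real.cosh (k * t) := by
      rw [rpow_sub (hcosh t), rpow_one]
    rw [hsplit, hH]
    field_simp
    ring
  have hHd : ∀ t, HasDerivAt H (-(k ^ 2 / 2) / Real.cosh (k * t) ^ 2) t := by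
    intro t
    have hq : HasDerivAt (fun s => Real.sinh (k * s) / Real.cosh (k * s))
        ((k * Real.cosh (k * t) * Real.cosh (k * t) - Real.sinh (k * t) * (k * Real.sinh (k * t)))
          / Real.cosh (k * t) ^ 2) t := (hsd t).div (hcd t) (hcosh t).ne'
    have := ((hasDerivAt_const t (-h' / 2)).sub (hq.const_mul (k / 2)))
    refine this.congr_deriv ?_
    have h1 : Real.cosh (k * t) ^ 2 - Real.sinh (k * t) ^ 2 = 1 := Real.cosh_sq_sub_sinh_sq _
    field_simp
    nlinarith [h1, sq_nonneg (Real.cosh (k*t))]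
  have hHeq : (fun s => deriv a s / a s) = H := by
    funext s
    rw [(hda s).deriv, mul_div_assoc, mul_comm]
    field_simp [hane s]
  refine ⟨hapos, ?_, ?_⟩
  · rw [hafun]
    refine (contDiff_const.mul ?_).mul ?_
    · exact Real.contDiff_exp.comp (ContDiff.div_const (contDiff_const.mul contDiff_id) 2)
    · exact ContDiff.rpow_const_of_ne (Real.contDiff_cosh.comp (contDiff_const.mul contDiff_id))
        (fun t => (hcosh t).ne')
  · intro t
    rw [hHeq, (hHd t).deriv, ha t]
    have hX : (k ^ ((1:ℝ)/2)) ^ (4:ℕ) = k ^ 2 := by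
      rw [← rpow_natCast (k ^ ((1:ℝ)/2)) 4, ← rpow_mul hk.le, ← rpow_natCast k 2]
      norm_num
    have hcne : (c : ℝ) ≠ 0 := hc.ne'
    have hXc : (c ^ ((1:ℝ)/4)) ^ (4:ℕ) = c := by
      rw [← rpow_natCast (c ^ ((1:ℝ)/4)) 4, ← rpow_mul hc.le]
      norm_num
    have hZ : (Real.cosh (k*t) ^ (-(1:ℝ)/2)) ^ (4:ℕ) = (Real.cosh (k*t) ^ 2)⁻¹ := by
      rw [← rpow_natCast (Real.cosh (k*t) ^ (-(1:ℝ)/2)) 4, ← rpow_mul (hcosh t).le]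
      norm_num
    have hY : (Real.exp (-h' * t / 2)) ^ (4:ℕ) = Real.exp (-2 * (h' * t)) := by
      rw [← Real.exp_nat_mul]
      congr 1
      push_cast
      ring
    have ha4 : (k ^ ((1 : ℝ) / 2) / c ^ ((1 : ℝ) / 4) *
        Real.exp (-h' * t / 2) * Real.cosh (k * t) ^ (-(1 : ℝ) / 2)) ^ 4
        = (k ^ 2 / c) * Real.exp (-2 * (h' * t)) / Real.cosh (k * t) ^ 2 := by
      rw [show (4:ℕ) = 4 from rfl] at hX hXc hZ hY
      rw [mul_pow, mul_pow, div_pow, hX, hXc, hZ, hY]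
      ring
    rw [ha4]
    have key : Real.exp (-2 * (h' * t)) * Real.exp (2 * h' * t) = 1 := by
      rw [← Real.exp_add, show -2 * (h' * t) + 2 * h' * t = 0 by ring, Real.exp_zero]
    have hstep : c / 2 * (k ^ 2 / c * Real.exp (-2 * (h' * t)) / Real.cosh (k*t) ^ 2)
        * Real.exp (2 * h' * t)
        = k ^ 2 / 2 / Real.cosh (k*t) ^ 2
          * (Real.exp (-2 * (h' * t)) * Real.exp (2 * h' * t)) := by
      field_simp
    rw [hstep, key, mul_one]
    ring
end
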